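/- Let (X,d) be a finite metric space and let Q = (q_{xy}) ∈ ℝ^{X×X} be a positive semidefinite matrix all of whose row sums vanish, such that Σ_{(x,y) : q_{xy} < 0} d(x,y)^2·(−q_{xy}) > 0. Then c_2(X,d)^2 ≥ (Σ_{(x,y) : q_{xy} > 0} d(x,y)^2·q_{xy}) / (Σ_{(x,y) : q_{xy} < 0} d(x,y)^2·(−q_{xy})). -/

import Mathlib

open scoped BigOperators

/-- The least distortion `c₂(X,d)` of an embedding of a finite metric space
into Euclidean space. -/
noncomputable def leastDistortion (X : Type*) [Fintype X] [MetricSpace X] : ℝ :=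
  sInf {D : ℝ | ∃ (m : ℕ) (ρ : X → EuclideanSpace ℝ (Fin m)),
    ∀ x y : X, dist x y ≤ ‖ρ x - ρ y‖ ∧ ‖ρ x - ρ y‖ ≤ D * dist x y}

/-!
If `ρ` embeds `X` with distortion `D`, then, because `Q` is positive semidefinite with vanishing
row (and, by symmetry, column) sums, `∑ q_xy ‖ρ x - ρ y‖² = -2 ∑ q_xy ⟪ρ x, ρ y⟫ ≤ 0`; the
inner-product sum is nonnegative by the Schur product theorem applied to `Q` and the Gram matrix
of `ρ`. Splitting this sum by the sign of `q_xy`, and bounding `‖ρ x - ρ y‖` below by `d(x,y)` on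
the positive entries and above by `D d(x,y)` on the negative ones, gives
`∑_{q_xy > 0} d(x,y)² q_xy ≤ D² ∑_{q_xy < 0} d(x,y)² (-q_xy)`.
-/

open Finset Matrix
open scoped RealInnerProductSpace

section QuadraticForm

variable {X E : Type*} [Fintype X] [SeminormedAddCommGroup E] [InnerProductSpace ℝ E]

theorem Matrix.PosSemidef.sum_mul_inner_nonneg {Q : Matrix X X ℝ} (hQ : Q.PosSemidef)
    (v : X → E) : 0 ≤ ∑ x, ∑ y, Q x y * ⟪v x, v y⟫ := by
  have h := (hQ.hadamard (posSemidef_gram ℝ v)).dotProduct_mulVec_nonneg 1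
  simpa [dotProduct, mulVec, hadamard_apply] using h

theorem Matrix.PosSemidef.sum_mul_norm_sub_sq_nonpos {Q : Matrix X X ℝ} (hQ : Q.PosSemidef)
    (hrow : ∀ x, ∑ y, Q x y = 0) (v : X → E) : ∑ x, ∑ y, Q x y * ‖v x - v y‖ ^ 2 ≤ 0 := by
  have hcol : ∀ y, ∑ x, Q x y = 0 := fun y => by
    simpa only [← hQ.isHermitian.apply y, star_trivial] using hrow y
  have hleft : ∑ x, ∑ y, Q x y * ‖v x‖ ^ 2 = 0 := by
    simp only [← sum_mul, hrow, zero_mul, sum_const_zero]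
  have hright : ∑ x, ∑ y, Q x y * ‖v y‖ ^ 2 = 0 := by
    rw [sum_comm]
    simp only [← sum_mul, hcol, zero_mul, sum_const_zero]
  have hexpand : ∑ x, ∑ y, Q x y * ‖v x - v y‖ ^ 2 =
      ∑ x, ∑ y, Q x y * ‖v x‖ ^ 2 + ∑ x, ∑ y, Q x y * ‖v y‖ ^ 2
        - 2 * ∑ x, ∑ y, Q x y * ⟪v x, v y⟫ := by
    simp only [mul_sum, ← sum_add_distrib, ← sum_sub_distrib, norm_sub_sq_real]
    exact sum_congr rfl fun x _ => sum_congr rfl fun y _ => by ring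
  linarith [hQ.sum_mul_inner_nonneg v]

end QuadraticForm

theorem mul_eq_ite_pos_sub_ite_neg (q w : ℝ) :
    q * w = (if 0 < q then w * q else 0) - (if q < 0 then w * -q else 0) := by
  rcases lt_trichotomy q 0 with hq | rfl | hq
  · simp [hq, hq.not_gt, mul_comm]
  · simp
  · simp [hq, hq.not_gt, mul_comm]

theorem sum_mul_eq_sum_pos_sub_sum_neg {X : Type*} [Fintype X] (Q w : X → X → ℝ) :
    ∑ x, ∑ y, Q x y * w x y =
      (∑ x, ∑ y, if 0 < Q x y then w x y * Q x y else 0) -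
        ∑ x, ∑ y, if Q x y < 0 then w x y * -Q x y else 0 := by
  simp only [← sum_sub_distrib, ← mul_eq_ite_pos_sub_ite_neg]

def EmbedsWithDistortion (X : Type*) [MetricSpace X] (D : ℝ) : Prop :=
  ∃ (m : ℕ) (ρ : X → EuclideanSpace ℝ (Fin m)),
    ∀ x y : X, dist x y ≤ ‖ρ x - ρ y‖ ∧ ‖ρ x - ρ y‖ ≤ D * dist x y

namespace EmbedsWithDistortion

variable {X : Type*} [MetricSpace X] {D : ℝ}

theorem one_le [Nontrivial X] (h : EmbedsWithDistortion X D) : 1 ≤ D := by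
  obtain ⟨m, ρ, hρ⟩ := h
  obtain ⟨x, y, hxy⟩ := exists_pair_ne X
  have hd : 0 < dist x y := dist_pos.2 hxy
  exact le_of_mul_le_mul_right (by linarith [hρ x y]) hd

theorem sum_pos_le_sq_mul_sum_neg [Fintype X] (h : EmbedsWithDistortion X D)
    {Q : Matrix X X ℝ} (hQ : Q.PosSemidef) (hrow : ∀ x, ∑ y, Q x y = 0) :
    (∑ x, ∑ y, if 0 < Q x y then dist x y ^ 2 * Q x y else 0) ≤
      D ^ 2 * ∑ x, ∑ y, if Q x y < 0 then dist x y ^ 2 * -Q x y else 0 := by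
  obtain ⟨m, ρ, hρ⟩ := h
  have hquad := hQ.sum_mul_norm_sub_sq_nonpos hrow ρ
  rw [sum_mul_eq_sum_pos_sub_sum_neg Q fun x y => ‖ρ x - ρ y‖ ^ 2] at hquad
  have hpos_le : (∑ x, ∑ y, if 0 < Q x y then dist x y ^ 2 * Q x y else 0) ≤
      ∑ x, ∑ y, if 0 < Q x y then ‖ρ x - ρ y‖ ^ 2 * Q x y else 0 := by
    gcongr with x _ y _
    split_ifs with hq
    · gcongr; exact (hρ x y).1
    · rfl
  have hneg_le : (∑ x, ∑ y, if Q x y < 0 then ‖ρ x - ρ y‖ ^ 2 * -Q x y else 0) ≤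
      D ^ 2 * ∑ x, ∑ y, if Q x y < 0 then dist x y ^ 2 * -Q x y else 0 := by
    simp only [mul_sum]
    gcongr with x _ y _
    split_ifs with hq
    · calc ‖ρ x - ρ y‖ ^ 2 * -Q x y ≤ (D * dist x y) ^ 2 * -Q x y := by
            gcongr
            · linarith
            · exact (hρ x y).2
        _ = D ^ 2 * (dist x y ^ 2 * -Q x y) := by ring
    · simp
  linarith

end EmbedsWithDistortion

/-- Fréchet embedding: the coordinates of `x` are its distances to the points of `X`. -/
theorem embedsWithDistortion_sqrt_card (X : Type*) [Fintype X] [MetricSpace X] :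
    EmbedsWithDistortion X √(Fintype.card X) := by
  set n := Fintype.card X
  let e : X ≃ Fin n := Fintype.equivFin X
  let ρ : X → EuclideanSpace ℝ (Fin n) := fun x => WithLp.toLp 2 fun i => dist x (e.symm i)
  have hnorm (x y : X) : ‖ρ x - ρ y‖ = √(∑ i, (dist x (e.symm i) - dist y (e.symm i)) ^ 2) := by
    simp [ρ, EuclideanSpace.norm_eq]
  refine ⟨n, ρ, fun x y => ⟨?_, ?_⟩⟩
  · rw [hnorm, ← Real.sqrt_sq dist_nonneg]
    gcongr
    refine le_of_eq_of_le ?_ (single_le_sum (fun i _ => sq_nonneg _) (mem_univ (e x)))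
    simp [dist_comm]
  · rw [hnorm, ← Real.sqrt_sq dist_nonneg, ← Real.sqrt_mul (Nat.cast_nonneg n)]
    gcongr
    calc ∑ i, (dist x (e.symm i) - dist y (e.symm i)) ^ 2 ≤ ∑ _i : Fin n, dist x y ^ 2 := by
          refine sum_le_sum fun i _ => ?_
          have h := abs_le.1 (abs_dist_sub_le x y (e.symm i))
          exact sq_le_sq' h.1 h.2
      _ = n * dist x y ^ 2 := by simp

theorem le_leastDistortion_sq {X : Type*} [Fintype X] [MetricSpace X] [Nontrivial X] {r : ℝ}
    (h : ∀ D, EmbedsWithDistortion X D → r ≤ D ^ 2) : r ≤ leastDistortion X ^ 2 := by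
  have hsqrt : √r ≤ leastDistortion X :=
    le_csInf ⟨_, embedsWithDistortion_sqrt_card X⟩ fun D hD =>
      Real.sqrt_le_iff.2 ⟨zero_le_one.trans (EmbedsWithDistortion.one_le hD), h D hD⟩
  exact (Real.sqrt_le_iff.1 hsqrt).2

theorem stmt4 {X : Type*} [Fintype X] [MetricSpace X]
    (Q : Matrix X X ℝ) (hQ : Q.PosSemidef) (hrow : ∀ x : X, ∑ y : X, Q x y = 0)
    (hpos : 0 < ∑ x : X, ∑ y : X, if Q x y < 0 then dist x y ^ 2 * (-(Q x y)) else 0) :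
    leastDistortion X ^ 2 ≥
      (∑ x : X, ∑ y : X, if 0 < Q x y then dist x y ^ 2 * Q x y else 0) /
      (∑ x : X, ∑ y : X, if Q x y < 0 then dist x y ^ 2 * (-(Q x y)) else 0) := by
  have : Nontrivial X := by
    by_contra hX
    have : Subsingleton X := not_nontrivial_iff_subsingleton.1 hX
    simp [dist_eq_zero.2 (Subsingleton.elim _ _)] at hpos
  refine le_leastDistortion_sq fun D hD => ?_
  rw [div_le_iff₀ hpos]
  exact hD.sum_pos_le_sq_mul_sum_neg hQ hrow
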